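/- Let Δ be a divergence on one-dimensional probability measures satisfying scale contraction: there is a nondecreasing c : [0,1] → [0,1] with Δ((x ↦ sx)_#α, (x ↦ sx)_#β) ≤ c(s)·Δ(α,β) for all s ∈ [0,1]. Then the max-sliced lift MSΔ(μ,ν) = sup_θ Δ((P_θ)_#μ, (P_θ)_#ν) satisfies, for every linear map A : ℝ^d → ℝ^d with ‖A‖_op ≤ 1: MSΔ(A_#μ, A_#ν) ≤ c(‖A‖_op)·MSΔ(μ,ν). -/

import Mathlib

open MeasureTheory ENNReal

/-- Projection of `ℝ^d` onto the direction `θ` of the unit sphere: `P_θ(x) = ⟨θ, x⟩`. -/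
noncomputable def sphereProj {d : ℕ} (θ : Metric.sphere (0 : EuclideanSpace ℝ (Fin d)) 1) :
    EuclideanSpace ℝ (Fin d) → ℝ :=
  fun x => (inner ℝ (θ : EuclideanSpace ℝ (Fin d)) x : ℝ)

/-- The max-sliced divergence associated with a base divergence `Δ` on measures on `ℝ`:
`MSΔ(μ,ν) = sup_{θ ∈ S^{d−1}} Δ((P_θ)_#μ, (P_θ)_#ν)`. -/
noncomputable def maxSlicedD {d : ℕ} (Δ : Measure ℝ → Measure ℝ → ℝ≥0∞)
    (μ ν : Measure (EuclideanSpace ℝ (Fin d))) : ℝ≥0∞ :=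
  ⨆ θ : Metric.sphere (0 : EuclideanSpace ℝ (Fin d)) 1,
    Δ (μ.map (sphereProj θ)) (ν.map (sphereProj θ))

/-- Max-sliced anisotropic scale contraction: if a divergence `Δ` on one-dimensional
probability measures satisfies scale contraction with a nondecreasing `c : [0,1] → [0,1]`,
then for every linear map `A : ℝ^d → ℝ^d` with `‖A‖_op ≤ 1`,
`MSΔ(A_#μ, A_#ν) ≤ c(‖A‖_op)·MSΔ(μ,ν)`. -/
theorem maxSlicedD_map_linear_le {d : ℕ}
    (Δ : Measure ℝ → Measure ℝ → ℝ≥0∞)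
    (hΔrefl : ∀ α : Measure ℝ, IsProbabilityMeasure α → Δ α α = 0)
    (c : ℝ → ℝ≥0∞) (hc : MonotoneOn c (Set.Icc 0 1))
    (hc1 : ∀ s ∈ Set.Icc (0 : ℝ) 1, c s ≤ 1)
    (hS : ∀ s ∈ Set.Icc (0 : ℝ) 1, ∀ α β : Measure ℝ,
      IsProbabilityMeasure α → IsProbabilityMeasure β →
      Δ (α.map (fun x => s * x)) (β.map (fun x => s * x)) ≤ c s * Δ α β)
    (A : EuclideanSpace ℝ (Fin d) →L[ℝ] EuclideanSpace ℝ (Fin d)) (hA : ‖A‖ ≤ 1)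
    (μ ν : Measure (EuclideanSpace ℝ (Fin d)))
    [IsProbabilityMeasure μ] [IsProbabilityMeasure ν] :
    maxSlicedD Δ (μ.map A) (ν.map A) ≤ c ‖A‖ * maxSlicedD Δ μ ν := by

  have hA0 : (0:ℝ) ≤ ‖A‖ := norm_nonneg _
  have hAmem : ‖A‖ ∈ Set.Icc (0:ℝ) 1 := ⟨hA0, hA⟩
  have hmeasA : Measurable (A : EuclideanSpace ℝ (Fin d) → EuclideanSpace ℝ (Fin d)) :=
    A.continuous.measurable
  have hmeasP : ∀ (φ : Metric.sphere (0 : EuclideanSpace ℝ (Fin d)) 1),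
      Measurable (sphereProj φ) := by
    intro φ
    exact (Continuous.inner (continuous_const : Continuous fun _ : EuclideanSpace ℝ (Fin d) => (φ : EuclideanSpace ℝ (Fin d))) continuous_id).measurable
  rw [maxSlicedD]
  apply iSup_le
  intro θ
  set B := ContinuousLinearMap.adjoint A with hB
  have hproj : ∀ x, sphereProj θ (A x) = inner ℝ (B θ.1) x := by
    intro x
    simp only [sphereProj, hB]
    rw [ContinuousLinearMap.adjoint_inner_left]
  have hmapcomp : ∀ (ρ : Measure (EuclideanSpace ℝ (Fin d))),
      (ρ.map A).map (sphereProj θ) = ρ.map (fun x => (inner ℝ (B θ.1) x : ℝ)) := by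
    intro ρ
    rw [Measure.map_map (hmeasP θ) hmeasA]
    congr 1
    funext x
    exact hproj x
  rw [hmapcomp μ, hmapcomp ν]
  by_cases h0 : B θ.1 = 0
  · have : (fun x : EuclideanSpace ℝ (Fin d) => (inner ℝ (B θ.1) x : ℝ)) = fun _ => (0:ℝ) := by
      funext x; rw [h0]; simp
    rw [this]
    have hprob : IsProbabilityMeasure (μ.map (fun _ : EuclideanSpace ℝ (Fin d) => (0:ℝ))) :=
      Measure.isProbabilityMeasure_map measurable_const.aemeasurable
    have hprob' : IsProbabilityMeasure (ν.map (fun _ : EuclideanSpace ℝ (Fin d) => (0:ℝ))) :=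
      Measure.isProbabilityMeasure_map measurable_const.aemeasurable
    have heq : (μ.map (fun _ : EuclideanSpace ℝ (Fin d) => (0:ℝ)))
        = (ν.map (fun _ : EuclideanSpace ℝ (Fin d) => (0:ℝ))) := by
      rw [Measure.map_const, Measure.map_const]
      simp
    rw [heq, hΔrefl _ hprob']
    exact zero_le
  · set r : ℝ := ‖B θ.1‖ with hr
    have hrpos : 0 < r := norm_pos_iff.mpr h0
    have hrA : r ≤ ‖A‖ := by
      calc r = ‖B θ.1‖ := rfl
        _ ≤ ‖B‖ * ‖θ.1‖ := B.le_opNorm _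
        _ = ‖A‖ := by
            have hBA : ‖B‖ = ‖A‖ := ContinuousLinearMap.adjoint.norm_map A
            rw [hBA]
            have : ‖θ.1‖ = 1 := by
              have := θ.2
              simpa using this
            rw [this, mul_one]
    have hrmem : r ∈ Set.Icc (0:ℝ) 1 := ⟨le_of_lt hrpos, hrA.trans hA⟩
    set φv : EuclideanSpace ℝ (Fin d) := r⁻¹ • B θ.1 with hφv
    have hφnorm : ‖φv‖ = 1 := by
      rw [hφv, norm_smul, norm_inv, Real.norm_eq_abs, abs_of_pos hrpos]
      field_simp
      exact hr.symm
    have hφmem : φv ∈ Metric.sphere (0 : EuclideanSpace ℝ (Fin d)) 1 := by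
      simp [hφnorm]
    set φ : Metric.sphere (0 : EuclideanSpace ℝ (Fin d)) 1 := ⟨φv, hφmem⟩ with hφ
    have hinner : ∀ x, (inner ℝ (B θ.1) x : ℝ) = r * sphereProj φ x := by
      intro x
      simp only [sphereProj, hφ, hφv]
      rw [real_inner_smul_left]
      field_simp
    have hmapr : ∀ (ρ : Measure (EuclideanSpace ℝ (Fin d))),
        ρ.map (fun x => (inner ℝ (B θ.1) x : ℝ))
          = (ρ.map (sphereProj φ)).map (fun x => r * x) := by
      intro ρ
      rw [Measure.map_map (measurable_const_mul r) (hmeasP φ)]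
      congr 1
      funext x
      exact hinner x
    rw [hmapr μ, hmapr ν]
    have hpμ : IsProbabilityMeasure (μ.map (sphereProj φ)) :=
      Measure.isProbabilityMeasure_map (hmeasP φ).aemeasurable
    have hpν : IsProbabilityMeasure (ν.map (sphereProj φ)) :=
      Measure.isProbabilityMeasure_map (hmeasP φ).aemeasurable
    calc (Δ ((μ.map (sphereProj φ)).map (fun x => r * x))
          ((ν.map (sphereProj φ)).map (fun x => r * x)))
        ≤ c r * Δ (μ.map (sphereProj φ)) (ν.map (sphereProj φ)) :=
          hS r hrmem _ _ hpμ hpν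
      _ ≤ c ‖A‖ * maxSlicedD Δ μ ν := by
          apply mul_le_mul' (hc hrmem hAmem hrA)
          exact le_iSup (fun ψ => Δ (μ.map (sphereProj ψ)) (ν.map (sphereProj ψ))) φ
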